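/- arXiv:2006.13330 — 4 statements merged into one kernel-verified Lean document; each statement's English description precedes it below -/
import Mathlib

section
/- Let f : ℝⁿ → ℝ be differentiable. Then for every y and every α > 0, f(y) - (α/2) ∫₀¹ sup_{x} ‖∇f(y + s(x - y))‖₂² ds ≤ M_f^α(y) ≤ f(y), where the supremum is over x in the domain (assumed such that the supremum is finite). -/
/-!
Restricting to `s = 1` shows that `‖∇f‖²` is bounded by `C := sup ‖∇f‖²`, and for `s ≠ 0` the map
`x ↦ y + s • (x - y)` is onto, so the integrand equals `C` almost everywhere and the integral is `C`.
By the mean value theorem `f y - f x ≤ √C ‖x - y‖`, and `√C r ≤ α C / 2 + r² / (2α)` (AM-GM) turns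
this into `f y - α C / 2 ≤ ‖x - y‖² / (2α) + f x` for every `x`; take the infimum. The upper bound
is the choice `x = y`, once the infimum is known to be bounded below.
-/

open Set

theorem mul_le_half_mul_sq_add_sq_div {α : ℝ} (hα : 0 < α) (a b : ℝ) :
    a * b ≤ α / 2 * a ^ 2 + b ^ 2 / (2 * α) := by
  have key : 0 ≤ (α * a - b) ^ 2 / (2 * α) := by positivity
  have expand : (α * a - b) ^ 2 / (2 * α) = α / 2 * a ^ 2 + b ^ 2 / (2 * α) - a * b := by
    field_simp
    ring
  linarith

section MoreauEnvelope

variable {E : Type*} [NormedAddCommGroup E]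

noncomputable def moreauEnvelope (f : E → ℝ) (α : ℝ) (y : E) : ℝ :=
  ⨅ x, ‖x - y‖ ^ 2 / (2 * α) + f x

theorem moreauEnvelope_le_self {f : E → ℝ} {α : ℝ} {y : E}
    (hbdd : BddBelow (range fun x => ‖x - y‖ ^ 2 / (2 * α) + f x)) :
    moreauEnvelope f α y ≤ f y :=
  calc moreauEnvelope f α y ≤ ‖y - y‖ ^ 2 / (2 * α) + f y := ciInf_le hbdd y
    _ = f y := by simp

variable [NormedSpace ℝ E]

theorem iSup_comp_homothety (g : E → ℝ) (y : E) {s : ℝ} (hs : s ≠ 0) :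
    ⨆ x, g (y + s • (x - y)) = ⨆ z, g z := by
  have hsurj : Function.Surjective fun x : E => y + s • (x - y) := fun z =>
    ⟨y + s⁻¹ • (z - y), by simp [smul_smul, mul_inv_cancel₀ hs]⟩
  exact congrArg sSup (hsurj.range_comp g)

theorem integral_iSup_comp_homothety (g : E → ℝ) (y : E) :
    ∫ s in (0 : ℝ)..1, ⨆ x, g (y + s • (x - y)) = ⨆ z, g z := by
  have hconst : ∀ᵐ s, s ∈ uIoc (0 : ℝ) 1 → ⨆ x, g (y + s • (x - y)) = ⨆ z, g z :=
    Filter.Eventually.of_forall fun s hs =>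
      iSup_comp_homothety g y (uIoc_of_le (zero_le_one' ℝ) ▸ hs).1.ne'
  rw [intervalIntegral.integral_congr_ae hconst]
  simp

theorem sub_le_moreau_objective {f : E → ℝ} {L α : ℝ} (hf : Differentiable ℝ f)
    (hL : ∀ z, ‖fderiv ℝ f z‖ ≤ L) (hα : 0 < α) (x y : E) :
    f y - α / 2 * L ^ 2 ≤ ‖x - y‖ ^ 2 / (2 * α) + f x := by
  have lipschitz : ‖f y - f x‖ ≤ L * ‖x - y‖ := norm_sub_rev y x ▸
    convex_univ.norm_image_sub_le_of_norm_fderiv_le (fun z _ => hf z) (fun z _ => hL z)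
      (mem_univ x) (mem_univ y)
  linarith [(le_abs_self (f y - f x)).trans lipschitz, mul_le_half_mul_sq_add_sq_div hα L ‖x - y‖]

theorem sub_le_moreauEnvelope {f : E → ℝ} {L α : ℝ} (hf : Differentiable ℝ f)
    (hL : ∀ z, ‖fderiv ℝ f z‖ ≤ L) (hα : 0 < α) (y : E) :
    f y - α / 2 * L ^ 2 ≤ moreauEnvelope f α y :=
  le_ciInf fun x => sub_le_moreau_objective hf hL hα x y

end MoreauEnvelope

/-- Moreau envelope bound for differentiable functions via the gradient along segments. -/
theorem moreau_envelope_gradient_bounds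
    (n : ℕ) (f : EuclideanSpace ℝ (Fin n) → ℝ) (hf : Differentiable ℝ f)
    (y : EuclideanSpace ℝ (Fin n)) (α : ℝ) (hα : 0 < α)
    (hbdd : ∀ s : ℝ, BddAbove (Set.range fun x : EuclideanSpace ℝ (Fin n) =>
      ‖fderiv ℝ f (y + s • (x - y))‖ ^ 2)) :
    f y - (α / 2) * ∫ s in (0:ℝ)..1,
        (⨆ x : EuclideanSpace ℝ (Fin n), ‖fderiv ℝ f (y + s • (x - y))‖ ^ 2) ≤
        (⨅ x : EuclideanSpace ℝ (Fin n), (‖x - y‖ ^ 2 / (2 * α) + f x)) ∧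
      (⨅ x : EuclideanSpace ℝ (Fin n), (‖x - y‖ ^ 2 / (2 * α) + f x)) ≤ f y := by
  rw [integral_iSup_comp_homothety (fun z => ‖fderiv ℝ f z‖ ^ 2) y]
  set C := ⨆ z, ‖fderiv ℝ f z‖ ^ 2
  have hbddC : BddAbove (range fun z => ‖fderiv ℝ f z‖ ^ 2) := by simpa using hbdd 1
  have hL : ∀ z, ‖fderiv ℝ f z‖ ≤ √C := fun z => Real.le_sqrt_of_sq_le (le_ciSup hbddC z)
  have hsqrt : √C ^ 2 = C := Real.sq_sqrt ((sq_nonneg _).trans (le_ciSup hbddC y))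
  rw [← hsqrt]
  exact ⟨sub_le_moreauEnvelope hf hL hα y,
    moreauEnvelope_le_self ⟨_, forall_mem_range.2 (sub_le_moreau_objective hf hL hα · y)⟩⟩
end

section
/- Tensorization of the 2-Wasserstein distance: for probability measures μ = ⊗ᵢ μᵢ and ν = ⊗ᵢ νᵢ on ℝⁿ (products of one-dimensional marginals), equipped with the Euclidean metric, W₂²(μ, ν) = ∑_{i=1}^n W₂²(μᵢ, νᵢ). In particular, if all μᵢ = μ₀ and all νᵢ = ν₀, then W₂²(μ, ν) = n·W₂²(μ₀, ν₀). -/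
/-!
Gluing one-dimensional couplings coordinatewise gives a coupling of the product measures whose
cost is the sum of their costs, so taking nearly optimal couplings of the factors bounds `W₂²`
of the products by the sum. Conversely, the coordinate pairs of any coupling of the products are
couplings of the factors, and the squared Euclidean cost is the sum of the squared coordinate
costs; the second moments make every such cost integrable, so the integral splits as well.
-/

open MeasureTheory

/-- The squared 2-Wasserstein distance with respect to a distance function `dst`,
defined via couplings. -/
noncomputable def W2sq {α : Type*} [MeasurableSpace α] (dst : α → α → ℝ)
    (μ ν : Measure α) : ℝ :=
  sInf {c | ∃ π : Measure (α × α),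
    π.map Prod.fst = μ ∧ π.map Prod.snd = ν ∧ c = ∫ p, dst p.1 p.2 ^ 2 ∂π}

section W2sq

variable {α : Type*} [MeasurableSpace α] {dst : α → α → ℝ} {μ ν : Measure α}

lemma W2sq_le_integral {π : Measure (α × α)} (h₁ : π.map Prod.fst = μ)
    (h₂ : π.map Prod.snd = ν) : W2sq dst μ ν ≤ ∫ p, dst p.1 p.2 ^ 2 ∂π := by
  refine csInf_le ⟨0, ?_⟩ ⟨π, h₁, h₂, rfl⟩
  rintro _ ⟨π, -, -, rfl⟩
  exact integral_nonneg fun p => sq_nonneg _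

lemma le_W2sq [IsProbabilityMeasure μ] [IsProbabilityMeasure ν] {c : ℝ}
    (h : ∀ π : Measure (α × α), π.map Prod.fst = μ → π.map Prod.snd = ν →
      c ≤ ∫ p, dst p.1 p.2 ^ 2 ∂π) :
    c ≤ W2sq dst μ ν := by
  refine le_csInf ⟨_, μ.prod ν, by simp, by simp, rfl⟩ ?_
  rintro _ ⟨π, h₁, h₂, rfl⟩
  exact h π h₁ h₂

lemma exists_integral_lt_W2sq_add [IsProbabilityMeasure μ] [IsProbabilityMeasure ν] {ε : ℝ}
    (hε : 0 < ε) :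
    ∃ π : Measure (α × α), π.map Prod.fst = μ ∧ π.map Prod.snd = ν ∧
      ∫ p, dst p.1 p.2 ^ 2 ∂π < W2sq dst μ ν + ε := by
  by_contra! h
  linarith [le_W2sq (dst := dst) fun π h₁ h₂ => h π h₁ h₂]

end W2sq

lemma integrable_sq_sub_of_map {π : Measure (ℝ × ℝ)} {μ ν : Measure ℝ}
    (h₁ : π.map Prod.fst = μ) (h₂ : π.map Prod.snd = ν)
    (hμ : Integrable (fun t : ℝ => t ^ 2) μ) (hν : Integrable (fun t : ℝ => t ^ 2) ν) :
    Integrable (fun q : ℝ × ℝ => (q.1 - q.2) ^ 2) π := by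
  have hμ' : MemLp id 2 (π.map Prod.fst) :=
    h₁ ▸ (memLp_two_iff_integrable_sq aestronglyMeasurable_id).2 hμ
  have hν' : MemLp id 2 (π.map Prod.snd) :=
    h₂ ▸ (memLp_two_iff_integrable_sq aestronglyMeasurable_id).2 hν
  exact ((hμ'.comp_of_map measurable_fst.aemeasurable).sub
    (hν'.comp_of_map measurable_snd.aemeasurable)).integrable_sq

section Coupling

variable {ι α β : Type*} [Fintype ι] [MeasurableSpace α] [MeasurableSpace β]

lemma map_fst_map_coord {π : Measure ((ι → α) × (ι → β))} {μ : ι → Measure α}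
    [∀ i, IsProbabilityMeasure (μ i)] (h : π.map Prod.fst = Measure.pi μ) (i : ι) :
    (π.map fun p => (p.1 i, p.2 i)).map Prod.fst = μ i := by
  rw [Measure.map_map measurable_fst (by fun_prop), ← (measurePreserving_eval μ i).map_eq, ← h,
    Measure.map_map (measurable_pi_apply i) measurable_fst]
  rfl

lemma map_snd_map_coord {π : Measure ((ι → α) × (ι → β))} {ν : ι → Measure β}
    [∀ i, IsProbabilityMeasure (ν i)] (h : π.map Prod.snd = Measure.pi ν) (i : ι) :
    (π.map fun p => (p.1 i, p.2 i)).map Prod.snd = ν i := by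
  rw [Measure.map_map measurable_snd (by fun_prop), ← (measurePreserving_eval ν i).map_eq, ← h,
    Measure.map_map (measurable_pi_apply i) measurable_snd]
  rfl

variable (π : ι → Measure (α × β)) [∀ i, IsProbabilityMeasure (π i)]

lemma map_fst_map_pi_arrowProdEquivProdArrow :
    ((Measure.pi π).map (MeasurableEquiv.arrowProdEquivProdArrow α β ι)).map Prod.fst =
      Measure.pi fun i => (π i).map Prod.fst := by
  rw [Measure.map_map measurable_fst (MeasurableEquiv.measurable _)]
  exact Measure.pi_map_pi fun _ => measurable_fst.aemeasurable

lemma map_snd_map_pi_arrowProdEquivProdArrow :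
    ((Measure.pi π).map (MeasurableEquiv.arrowProdEquivProdArrow α β ι)).map Prod.snd =
      Measure.pi fun i => (π i).map Prod.snd := by
  rw [Measure.map_map measurable_snd (MeasurableEquiv.measurable _)]
  exact Measure.pi_map_pi fun _ => measurable_snd.aemeasurable

lemma map_coord_map_pi_arrowProdEquivProdArrow (i : ι) :
    ((Measure.pi π).map (MeasurableEquiv.arrowProdEquivProdArrow α β ι)).map
      (fun p => (p.1 i, p.2 i)) = π i := by
  rw [Measure.map_map (by fun_prop) (MeasurableEquiv.measurable _)]
  exact (measurePreserving_eval π i).map_eq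

end Coupling

variable {ι : Type*} [Fintype ι]

lemma integral_euclidean_cost_eq_sum {π : Measure ((ι → ℝ) × (ι → ℝ))}
    (h : ∀ i, Integrable (fun q : ℝ × ℝ => (q.1 - q.2) ^ 2)
      (π.map fun p => (p.1 i, p.2 i))) :
    ∫ p, √(∑ i, (p.1 i - p.2 i) ^ 2) ^ 2 ∂π =
      ∑ i, ∫ q, |q.1 - q.2| ^ 2 ∂(π.map fun p => (p.1 i, p.2 i)) := by
  simp_rw [Real.sq_sqrt (Finset.sum_nonneg fun i _ => sq_nonneg _), sq_abs]
  rw [integral_finsetSum (f := fun i (p : (ι → ℝ) × (ι → ℝ)) => (p.1 i - p.2 i) ^ 2) _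
    fun i _ => (h i).comp_measurable (by fun_prop)]
  refine Finset.sum_congr rfl fun i _ => ?_
  rw [integral_map (by fun_prop) (by fun_prop)]

variable (μ ν : ι → Measure ℝ)

lemma sum_W2sq_le_W2sq_pi
    [∀ i, IsProbabilityMeasure (μ i)] [∀ i, IsProbabilityMeasure (ν i)]
    (hμ : ∀ i, Integrable (fun t : ℝ => t ^ 2) (μ i))
    (hν : ∀ i, Integrable (fun t : ℝ => t ^ 2) (ν i)) :
    ∑ i, W2sq (fun a b : ℝ => |a - b|) (μ i) (ν i) ≤
      W2sq (fun x y : ι → ℝ => √(∑ i, (x i - y i) ^ 2))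
        (Measure.pi μ) (Measure.pi ν) := by
  refine le_W2sq fun π h₁ h₂ => ?_
  have h₁' := map_fst_map_coord h₁
  have h₂' := map_snd_map_coord h₂
  rw [integral_euclidean_cost_eq_sum fun i =>
    integrable_sq_sub_of_map (h₁' i) (h₂' i) (hμ i) (hν i)]
  exact Finset.sum_le_sum fun i _ => W2sq_le_integral (h₁' i) (h₂' i)

lemma W2sq_pi_le_sum_integral [∀ i, IsProbabilityMeasure (μ i)]
    (hμ : ∀ i, Integrable (fun t : ℝ => t ^ 2) (μ i))
    (hν : ∀ i, Integrable (fun t : ℝ => t ^ 2) (ν i)) {π : ι → Measure (ℝ × ℝ)}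
    (h₁ : ∀ i, (π i).map Prod.fst = μ i) (h₂ : ∀ i, (π i).map Prod.snd = ν i) :
    W2sq (fun x y : ι → ℝ => √(∑ i, (x i - y i) ^ 2)) (Measure.pi μ) (Measure.pi ν) ≤
      ∑ i, ∫ q, |q.1 - q.2| ^ 2 ∂(π i) := by
  have : ∀ i, IsProbabilityMeasure (π i) := fun i =>
    (Measure.isProbabilityMeasure_map_iff measurable_fst.aemeasurable).1 (h₁ i ▸ inferInstance)
  set ρ := (Measure.pi π).map (MeasurableEquiv.arrowProdEquivProdArrow ℝ ℝ ι)
  have hρ₁ : ρ.map Prod.fst = Measure.pi μ := by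
    rw [map_fst_map_pi_arrowProdEquivProdArrow, funext h₁]
  have hρ₂ : ρ.map Prod.snd = Measure.pi ν := by
    rw [map_snd_map_pi_arrowProdEquivProdArrow, funext h₂]
  have hρ : ∀ i, ρ.map (fun p => (p.1 i, p.2 i)) = π i :=
    map_coord_map_pi_arrowProdEquivProdArrow π
  calc W2sq (fun x y : ι → ℝ => √(∑ i, (x i - y i) ^ 2)) (Measure.pi μ) (Measure.pi ν)
      ≤ ∫ p, √(∑ i, (p.1 i - p.2 i) ^ 2) ^ 2 ∂ρ := W2sq_le_integral hρ₁ hρ₂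
    _ = ∑ i, ∫ q, |q.1 - q.2| ^ 2 ∂(π i) := by
      rw [integral_euclidean_cost_eq_sum fun i => hρ i ▸
        integrable_sq_sub_of_map (h₁ i) (h₂ i) (hμ i) (hν i)]
      simp only [hρ]

lemma W2sq_pi_le_sum_W2sq
    [∀ i, IsProbabilityMeasure (μ i)] [∀ i, IsProbabilityMeasure (ν i)]
    (hμ : ∀ i, Integrable (fun t : ℝ => t ^ 2) (μ i))
    (hν : ∀ i, Integrable (fun t : ℝ => t ^ 2) (ν i)) :
    W2sq (fun x y : ι → ℝ => √(∑ i, (x i - y i) ^ 2)) (Measure.pi μ) (Measure.pi ν) ≤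
      ∑ i, W2sq (fun a b : ℝ => |a - b|) (μ i) (ν i) := by
  refine le_of_forall_pos_le_add fun ε hε => ?_
  set δ := ε / (Fintype.card ι + 1)
  have hδ : 0 < δ := by positivity
  choose π h₁ h₂ hπ using fun i =>
    exists_integral_lt_W2sq_add (dst := fun a b : ℝ => |a - b|) (μ := μ i) (ν := ν i) hδ
  calc W2sq (fun x y : ι → ℝ => √(∑ i, (x i - y i) ^ 2)) (Measure.pi μ) (Measure.pi ν)
      ≤ ∑ i, ∫ q, |q.1 - q.2| ^ 2 ∂(π i) := W2sq_pi_le_sum_integral μ ν hμ hν h₁ h₂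
    _ ≤ ∑ i, (W2sq (fun a b : ℝ => |a - b|) (μ i) (ν i) + δ) :=
      Finset.sum_le_sum fun i _ => (hπ i).le
    _ ≤ ∑ i, W2sq (fun a b : ℝ => |a - b|) (μ i) (ν i) + ε := by
      rw [Finset.sum_add_distrib, Finset.sum_const, Finset.card_univ, nsmul_eq_mul]
      gcongr
      rw [mul_div_assoc', div_le_iff₀ (by positivity)]
      nlinarith

lemma W2sq_pi_eq_sum_W2sq
    [∀ i, IsProbabilityMeasure (μ i)] [∀ i, IsProbabilityMeasure (ν i)]
    (hμ : ∀ i, Integrable (fun t : ℝ => t ^ 2) (μ i))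
    (hν : ∀ i, Integrable (fun t : ℝ => t ^ 2) (ν i)) :
    W2sq (fun x y : ι → ℝ => √(∑ i, (x i - y i) ^ 2)) (Measure.pi μ) (Measure.pi ν) =
      ∑ i, W2sq (fun a b : ℝ => |a - b|) (μ i) (ν i) :=
  (W2sq_pi_le_sum_W2sq μ ν hμ hν).antisymm (sum_W2sq_le_W2sq_pi μ ν hμ hν)

/-- Tensorization of the squared 2-Wasserstein distance for product measures on `ℝⁿ`
with the Euclidean metric; in particular, for identical marginals it equals `n` times
the one-dimensional squared distance. -/
theorem wasserstein2_tensorization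
    (n : ℕ) (μi νi : Fin n → Measure ℝ)
    [∀ i, IsProbabilityMeasure (μi i)] [∀ i, IsProbabilityMeasure (νi i)]
    (hμ : ∀ i, Integrable (fun t : ℝ => t ^ 2) (μi i))
    (hν : ∀ i, Integrable (fun t : ℝ => t ^ 2) (νi i)) :
    W2sq (fun x y : Fin n → ℝ => Real.sqrt (∑ i, (x i - y i) ^ 2))
        (Measure.pi μi) (Measure.pi νi)
      = ∑ i, W2sq (fun a b : ℝ => |a - b|) (μi i) (νi i) ∧
    ∀ i₀ : Fin n, (∀ i, μi i = μi i₀) → (∀ i, νi i = νi i₀) →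
      W2sq (fun x y : Fin n → ℝ => Real.sqrt (∑ i, (x i - y i) ^ 2))
          (Measure.pi μi) (Measure.pi νi)
        = n * W2sq (fun a b : ℝ => |a - b|) (μi i₀) (νi i₀) := by
  refine ⟨W2sq_pi_eq_sum_W2sq μi νi hμ hν, fun i₀ hμ₀ hν₀ => ?_⟩
  rw [W2sq_pi_eq_sum_W2sq μi νi hμ hν,
    Finset.sum_congr rfl fun i _ => by rw [hμ₀ i, hν₀ i]]
  simp
end

section
/- Villani's total-variation bound for Wasserstein distance on bounded spaces: for probability measures μ, ν on a Polish space (X, d) with finite diameter D, W_p^p(μ, ν) ≤ D^p · 2^{p/q} · ‖μ - ν‖_TV, where 1/p + 1/q = 1. -/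
open MeasureTheory

/-- The `p`-Wasserstein distance with respect to a distance function `dst`,
defined via couplings. -/
noncomputable def wassersteinP {α : Type*} [MeasurableSpace α] (p : ℝ) (dst : α → α → ℝ)
    (μ ν : Measure α) : ℝ :=
  sInf {c | ∃ π : Measure (α × α),
    π.map Prod.fst = μ ∧ π.map Prod.snd = ν ∧
      c = (∫ pr, dst pr.1 pr.2 ^ p ∂π) ^ (1 / p)}

/-- The total variation distance between two measures. -/
noncomputable def tvDist {α : Type*} [MeasurableSpace α] (μ ν : Measure α) : ℝ :=
  sSup {c | ∃ s : Set α, MeasurableSet s ∧ c = |(μ s).toReal - (ν s).toReal|}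

/-!
A Hahn decomposition writes `μ = η + ρ` and `ν = η + σ`, where `η` is the common part of `μ` and
`ν` and the excesses `ρ`, `σ` have equal mass `|μ s - ν s| ≤ ‖μ - ν‖_TV`. The coupling that keeps
`η` on the diagonal and sends `ρ` to `σ` independently moves only that mass, each unit over a
distance at most `D`, so `W_p^p ≤ D^p ‖μ - ν‖_TV`; finally `2^{p/q} ≥ 1` since `q ≥ 0`.
-/

open Set

section

variable {α : Type*} [MeasurableSpace α]

theorem wassersteinP_rpow_le_integral {p : ℝ} (hp : 0 < p) {dst : α → α → ℝ}
    (hdst : ∀ x y, 0 ≤ dst x y) {μ ν : Measure α} (π : Measure (α × α))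
    (hπ₁ : π.map Prod.fst = μ) (hπ₂ : π.map Prod.snd = ν) :
    wassersteinP p dst μ ν ^ p ≤ ∫ z, dst z.1 z.2 ^ p ∂π := by
  have hcost : ∀ π' : Measure (α × α), 0 ≤ ∫ z, dst z.1 z.2 ^ p ∂π' := fun _ ↦
    integral_nonneg fun z ↦ Real.rpow_nonneg (hdst _ _) p
  have hbdd : ∀ c ∈ {c | ∃ π' : Measure (α × α), π'.map Prod.fst = μ ∧ π'.map Prod.snd = ν ∧
      c = (∫ z, dst z.1 z.2 ^ p ∂π') ^ (1 / p)}, 0 ≤ c := by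
    rintro _ ⟨π', -, -, rfl⟩
    exact Real.rpow_nonneg (hcost π') _
  calc wassersteinP p dst μ ν ^ p ≤ ((∫ z, dst z.1 z.2 ^ p ∂π) ^ (1 / p)) ^ p :=
        Real.rpow_le_rpow (Real.sInf_nonneg hbdd) (csInf_le ⟨0, hbdd⟩ ⟨π, hπ₁, hπ₂, rfl⟩) hp.le
    _ = ∫ z, dst z.1 z.2 ^ p ∂π := by
        rw [← Real.rpow_mul (hcost π), one_div_mul_cancel hp.ne', Real.rpow_one]

theorem abs_sub_le_tvDist {μ ν : Measure α} [IsFiniteMeasure μ] [IsFiniteMeasure ν] {s : Set α}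
    (hs : MeasurableSet s) : |(μ s).toReal - (ν s).toReal| ≤ tvDist μ ν := by
  refine le_csSup ⟨μ.real univ + ν.real univ, ?_⟩ ⟨s, hs, rfl⟩
  rintro _ ⟨t, -, rfl⟩
  calc |(μ t).toReal - (ν t).toReal| ≤ |(μ t).toReal| + |(ν t).toReal| := abs_sub _ _
    _ = μ.real t + ν.real t := by simp only [abs_of_nonneg ENNReal.toReal_nonneg, measureReal_def]
    _ ≤ μ.real univ + ν.real univ := add_le_add (measureReal_mono (subset_univ t))
        (measureReal_mono (subset_univ t))

theorem exists_eq_add_eq_add_real_le_tvDist (μ ν : Measure α) [IsFiniteMeasure μ]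
    [IsFiniteMeasure ν] (h : μ univ = ν univ) :
    ∃ η ρ σ : Measure α, μ = η + ρ ∧ ν = η + σ ∧ ρ univ = σ univ ∧ ρ.real univ ≤ tvDist μ ν := by
  obtain ⟨s, hs, hνμ, hμν⟩ := exists_isHahnDecomposition ν μ
  set η := ν.restrict s + μ.restrict sᶜ
  set ρ := μ.restrict s - ν.restrict s
  have hμ : μ = η + ρ := by
    rw [add_right_comm, add_comm (ν.restrict s), Measure.sub_add_cancel_of_le hνμ,
      Measure.restrict_add_restrict_compl hs]
  have hν : ν = η + (ν.restrict sᶜ - μ.restrict sᶜ) := by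
    rw [add_assoc, add_comm (μ.restrict sᶜ), Measure.sub_add_cancel_of_le hμν,
      Measure.restrict_add_restrict_compl hs]
  refine ⟨η, ρ, _, hμ, hν, ?_, ?_⟩
  · have : IsFiniteMeasure η := isFiniteMeasure_of_le μ (hμ ▸ Measure.le_add_right le_rfl)
    rw [hμ, hν, Measure.add_apply, Measure.add_apply] at h
    exact (ENNReal.add_right_inj (measure_ne_top η _)).mp h
  · have hνμs : ν s ≤ μ s := by simpa using hνμ univ
    calc ρ.real univ = |(μ s).toReal - (ν s).toReal| := by
          rw [measureReal_def, Measure.sub_apply .univ hνμ, Measure.restrict_apply_univ,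
            Measure.restrict_apply_univ, ENNReal.toReal_sub_of_le hνμs (measure_ne_top _ _),
            abs_of_nonneg (sub_nonneg.mpr (ENNReal.toReal_mono (measure_ne_top _ _) hνμs))]
      _ ≤ tvDist μ ν := abs_sub_le_tvDist hs

theorem Measure.inv_measure_univ_smul_smul {m ρ : Measure α} [IsFiniteMeasure m]
    (h : m = 0 → ρ = 0) : (m univ)⁻¹ • m univ • ρ = ρ := by
  rcases eq_or_ne m 0 with rfl | hm
  · simp [h rfl]
  · rw [smul_smul, ENNReal.inv_mul_cancel (by simpa using hm) (measure_ne_top _ _), one_smul]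

variable {ρ σ : Measure α} [IsFiniteMeasure ρ] [IsFiniteMeasure σ]

theorem map_fst_inv_smul_prod (h : ρ univ = σ univ) :
    ((ρ univ)⁻¹ • ρ.prod σ).map Prod.fst = ρ := by
  rw [Measure.map_smul, Measure.map_fst_prod, ← h, Measure.inv_measure_univ_smul_smul id]

theorem map_snd_inv_smul_prod (h : ρ univ = σ univ) :
    ((ρ univ)⁻¹ • ρ.prod σ).map Prod.snd = σ := by
  refine (Measure.map_smul _ _ _).trans ?_
  rw [Measure.map_snd_prod, Measure.inv_measure_univ_smul_smul]
  rintro rfl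
  exact Measure.measure_univ_eq_zero.mp (by simpa using h.symm)

theorem inv_smul_prod_apply_univ (h : ρ univ = σ univ) :
    ((ρ univ)⁻¹ • ρ.prod σ) univ = ρ univ := by
  conv_rhs => rw [← map_fst_inv_smul_prod h]
  rw [Measure.map_apply measurable_fst .univ, preimage_univ]

noncomputable def transportCoupling (η ρ σ : Measure α) : Measure (α × α) :=
  η.map (fun x => (x, x)) + (ρ univ)⁻¹ • ρ.prod σ

theorem map_fst_transportCoupling (η : Measure α) (h : ρ univ = σ univ) :
    (transportCoupling η ρ σ).map Prod.fst = η + ρ := by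
  rw [transportCoupling, Measure.map_add _ _ measurable_fst,
    Measure.map_map measurable_fst (by fun_prop : Measurable fun x : α => (x, x)),
    map_fst_inv_smul_prod h]
  exact congrArg (· + ρ) Measure.map_id

theorem map_snd_transportCoupling (η : Measure α) (h : ρ univ = σ univ) :
    (transportCoupling η ρ σ).map Prod.snd = η + σ := by
  rw [transportCoupling, Measure.map_add _ _ measurable_snd,
    Measure.map_map measurable_snd (by fun_prop : Measurable fun x : α => (x, x)),
    map_snd_inv_smul_prod h]
  exact congrArg (· + σ) Measure.map_id

theorem integral_transportCoupling_le (η : Measure α) [IsFiniteMeasure η] (h : ρ univ = σ univ)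
    {f : α × α → ℝ} {M : ℝ} (hf : Measurable f) (hf_nonneg : ∀ z, 0 ≤ f z)
    (hf_le : ∀ z, f z ≤ M) (hf_diag : ∀ x, f (x, x) = 0) :
    ∫ z, f z ∂transportCoupling η ρ σ ≤ M * ρ.real univ := by
  have : IsFiniteMeasure ((ρ univ)⁻¹ • ρ.prod σ) :=
    ⟨by rw [inv_smul_prod_apply_univ h]; exact measure_lt_top _ _⟩
  have hnorm : ∀ z, ‖f z‖ ≤ M := fun z ↦ by
    rw [Real.norm_of_nonneg (hf_nonneg z)]; exact hf_le z
  have hint : ∀ (m : Measure (α × α)) [IsFiniteMeasure m], Integrable f m := fun m _ ↦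
    (integrable_const M).mono' hf.aestronglyMeasurable (.of_forall hnorm)
  have hdiag : ∫ z, f z ∂η.map (fun x => (x, x)) = 0 := by
    rw [integral_map (by fun_prop) hf.aestronglyMeasurable]
    simp [hf_diag]
  rw [transportCoupling, integral_add_measure (hint _) (hint _), hdiag, zero_add]
  calc ∫ z, f z ∂(ρ univ)⁻¹ • ρ.prod σ ≤ ‖∫ z, f z ∂(ρ univ)⁻¹ • ρ.prod σ‖ := Real.le_norm_self _
    _ ≤ M * ((ρ univ)⁻¹ • ρ.prod σ).real univ :=
        norm_integral_le_of_norm_le_const (.of_forall hnorm)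
    _ = M * ρ.real univ := by rw [measureReal_def, inv_smul_prod_apply_univ h, measureReal_def]

end

/-- Villani's total-variation bound for the Wasserstein distance on bounded spaces:
`W_p^p(μ,ν) ≤ D^p · 2^{p/q} · ‖μ - ν‖_TV` with `1/p + 1/q = 1`. -/
theorem wasserstein_le_tv
    (X : Type*) [MetricSpace X] [PolishSpace X] [MeasurableSpace X] [BorelSpace X]
    (p q D : ℝ) (hp : 1 ≤ p) (hpq : 1 / p + 1 / q = 1)
    (hD : ∀ x y : X, dist x y ≤ D)
    (μ ν : Measure X) [IsProbabilityMeasure μ] [IsProbabilityMeasure ν] :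
    wassersteinP p dist μ ν ^ p ≤ D ^ p * 2 ^ (p / q) * tvDist μ ν := by
  have hp0 : 0 < p := one_pos.trans_le hp
  obtain ⟨η, ρ, σ, hμ, hν, hρσ, hρ_tv⟩ :=
    exists_eq_add_eq_add_real_le_tvDist μ ν (measure_univ.trans measure_univ.symm)
  have : IsFiniteMeasure η := isFiniteMeasure_of_le μ (hμ ▸ Measure.le_add_right le_rfl)
  have : IsFiniteMeasure ρ := isFiniteMeasure_of_le μ (hμ ▸ Measure.le_add_left le_rfl)
  have : IsFiniteMeasure σ := isFiniteMeasure_of_le ν (hν ▸ Measure.le_add_left le_rfl)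
  have h_two_pow : 1 ≤ (2 : ℝ) ^ (p / q) := by
    have : 0 ≤ q := one_div_nonneg.mp (by linarith [(div_le_one hp0).mpr hp])
    exact Real.one_le_rpow one_le_two (div_nonneg hp0.le this)
  have h_tv : 0 ≤ tvDist μ ν := measureReal_nonneg.trans hρ_tv
  calc wassersteinP p dist μ ν ^ p ≤ ∫ z, dist z.1 z.2 ^ p ∂transportCoupling η ρ σ :=
        wassersteinP_rpow_le_integral hp0 (fun _ _ ↦ dist_nonneg) _
          (hμ ▸ map_fst_transportCoupling η hρσ) (hν ▸ map_snd_transportCoupling η hρσ)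
    _ ≤ D ^ p * ρ.real univ :=
        integral_transportCoupling_le η hρσ (by fun_prop) (fun _ ↦ by positivity)
          (fun _ ↦ Real.rpow_le_rpow dist_nonneg (hD _ _) hp0.le)
          (fun _ ↦ by simp [Real.zero_rpow hp0.ne'])
    _ ≤ D ^ p * 2 ^ (p / q) * tvDist μ ν := by
        obtain ⟨x⟩ := nonempty_of_isProbabilityMeasure μ
        have hDp : 0 ≤ D ^ p := Real.rpow_nonneg (dist_nonneg.trans (hD x x)) p
        rw [mul_assoc]
        gcongr
        exact hρ_tv.trans (le_mul_of_one_le_left h_tv h_two_pow)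
end

section
/- Consider the dual objective g(λ) = λR² - (1/N)∑_{k=1}^N inf_{ζ ∈ Ξ}(λ(ξ_k - ζ)² - φ(ζ)), where sup_{ζ∈Ξ}|φ(ζ)| ≤ 1, the points ξ_k ∈ Ξ, and R > 0. Then any minimizer λ* of g over [0,∞) satisfies λ* ≤ 2/R². -/
/-!
Testing `ζ = ξₖ` bounds each infimum by `-φ(ξₖ) ≤ 1`, so `g λ ≥ λR² - 1`; at `λ = 0` each
infimum is `inf (-φ) ≥ -1`, so `g 0 ≤ 1`. Minimality gives `λ*R² - 1 ≤ g λ* ≤ g 0 ≤ 1`.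
-/

open Finset

section Average

variable {ι : Type*} {s : Finset ι} {f : ι → ℝ} {c : ℝ}

theorem one_div_card_mul_sum_le (hc : 0 ≤ c) (h : ∀ i ∈ s, f i ≤ c) :
    1 / (#s : ℝ) * ∑ i ∈ s, f i ≤ c := by
  calc 1 / (#s : ℝ) * ∑ i ∈ s, f i ≤ 1 / (#s : ℝ) * (#s * c) := by
        gcongr
        simpa using sum_le_sum h
    _ = (#s / #s : ℝ) * c := by ring
    _ ≤ c := mul_le_of_le_one_left hc (div_self_le_one _)

theorem le_one_div_card_mul_sum (hc : c ≤ 0) (h : ∀ i ∈ s, c ≤ f i) :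
    c ≤ 1 / (#s : ℝ) * ∑ i ∈ s, f i := by
  have := one_div_card_mul_sum_le (f := fun i => -f i) (neg_nonneg.2 hc)
    fun i hi => neg_le_neg (h i hi)
  simp only [sum_neg_distrib, mul_neg] at this
  linarith

end Average

section Infimum

variable {Ξ : Set ℝ} {φ : ℝ → ℝ} {lam x : ℝ}

theorem neg_one_le_sq_sub (hφ : ∀ ζ ∈ Ξ, |φ ζ| ≤ 1) (hlam : 0 ≤ lam) (ζ : Ξ) :
    -1 ≤ lam * (x - ζ) ^ 2 - φ ζ := by
  have := (abs_le.1 (hφ ζ ζ.2)).2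
  nlinarith [mul_nonneg hlam (sq_nonneg (x - ζ))]

theorem iInf_sq_sub_le_one (hφ : ∀ ζ ∈ Ξ, |φ ζ| ≤ 1) (hlam : 0 ≤ lam) (hx : x ∈ Ξ) :
    ⨅ ζ : Ξ, (lam * (x - ζ) ^ 2 - φ ζ) ≤ 1 := by
  have hbdd : BddBelow (Set.range fun ζ : Ξ => lam * (x - ζ) ^ 2 - φ ζ) :=
    ⟨-1, Set.forall_mem_range.2 (neg_one_le_sq_sub hφ hlam)⟩
  calc ⨅ ζ : Ξ, (lam * (x - ζ) ^ 2 - φ ζ) ≤ lam * (x - x) ^ 2 - φ x :=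
        ciInf_le hbdd ⟨x, hx⟩
    _ = -φ x := by ring
    _ ≤ 1 := by linarith [(abs_le.1 (hφ x hx)).1]

theorem neg_one_le_iInf_sq_sub (hφ : ∀ ζ ∈ Ξ, |φ ζ| ≤ 1) (hlam : 0 ≤ lam) (hx : x ∈ Ξ) :
    -1 ≤ ⨅ ζ : Ξ, (lam * (x - ζ) ^ 2 - φ ζ) :=
  have : Nonempty Ξ := ⟨⟨x, hx⟩⟩
  le_ciInf (neg_one_le_sq_sub hφ hlam)

end Infimum

theorem dual_multiplier_bound_general
    (Ξ : Set ℝ) (φ : ℝ → ℝ) (hφ : ∀ ζ ∈ Ξ, |φ ζ| ≤ 1)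
    (N : ℕ) (ξ : Fin N → ℝ) (hξ : ∀ k, ξ k ∈ Ξ)
    (R : ℝ) (hR : 0 < R)
    (g : ℝ → ℝ)
    (hg : ∀ lam, g lam = lam * R ^ 2 -
      (1 / (N : ℝ)) * ∑ k, ⨅ ζ : Ξ, (lam * (ξ k - (ζ : ℝ)) ^ 2 - φ ζ))
    (lamstar : ℝ) (h0 : 0 ≤ lamstar) (hmin : ∀ lam, 0 ≤ lam → g lamstar ≤ g lam) :
    lamstar ≤ 2 / R ^ 2 := by
  have hg0 : g 0 ≤ 1 := by
    have := le_one_div_card_mul_sum (s := univ) (c := -1) (by norm_num)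
      fun k _ => neg_one_le_iInf_sq_sub (x := ξ k) hφ le_rfl (hξ k)
    rw [card_univ, Fintype.card_fin] at this
    rw [hg]
    linarith
  have hg_lamstar : lamstar * R ^ 2 - 1 ≤ g lamstar := by
    have := one_div_card_mul_sum_le (s := univ) zero_le_one
      fun k _ => iInf_sq_sub_le_one (x := ξ k) hφ h0 (hξ k)
    rw [card_univ, Fintype.card_fin] at this
    rw [hg]
    linarith
  rw [le_div_iff₀ (by positivity)]
  linarith [hmin 0 le_rfl]

/-- Any minimizer over `[0,∞)` of the dual objective
`g(λ) = λR² - (1/N)∑ₖ inf_{ζ∈Ξ} (λ(ξₖ-ζ)² - φ(ζ))` satisfies `λ* ≤ 2/R²`. -/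
theorem dual_multiplier_bound
    (Ξ : Set ℝ) (hΞ : Ξ.Nonempty) (φ : ℝ → ℝ) (hφ : ∀ ζ ∈ Ξ, |φ ζ| ≤ 1)
    (N : ℕ) (hN : 0 < N) (ξ : Fin N → ℝ) (hξ : ∀ k, ξ k ∈ Ξ)
    (R : ℝ) (hR : 0 < R)
    (g : ℝ → ℝ)
    (hg : ∀ lam, g lam = lam * R ^ 2 -
      (1 / (N : ℝ)) * ∑ k, ⨅ ζ : Ξ, (lam * (ξ k - (ζ : ℝ)) ^ 2 - φ ζ))
    (lamstar : ℝ) (h0 : 0 ≤ lamstar) (hmin : ∀ lam, 0 ≤ lam → g lamstar ≤ g lam) :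
    lamstar ≤ 2 / R ^ 2 :=
  dual_multiplier_bound_general Ξ φ hφ N ξ hξ R hR g hg lamstar h0 hmin
end
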